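/- The polynomial P₃(T) = T²⁰ − 4T¹⁸ + 10T¹⁶ − 18T¹⁴ + 25T¹² − (307/11)·T¹⁰ + 25T⁸ − 18T⁶ + 10T⁴ − 4T² + 1 ∈ ℚ[T] is irreducible over ℚ, and no complex root of unity is a root of P₃ (i.e. if z ∈ ℂ satisfies zⁿ = 1 for some n ≥ 1, then P₃(z) ≠ 0). -/

import Mathlib

/-!
Clearing the denominator, `11 • P₃` is a primitive integer polynomial `Q₃ ≡ X ^ 10 (mod 11)`
whose constant and leading coefficients are exactly divisible by `11`. Modulo `11`, a
factorization `Q₃ = A * B` reads `A ≡ s X ^ i`, `B ≡ t X ^ (10 - i)`. If `0 < i < 10`, then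
`11 ∣ A(0), B(0)`, against `A(0) B(0) = 11`. If `i = 0` and `A` is not constant, comparing leading
and constant coefficients forces `A(0)` and `B` to have unit coefficients in degrees `0` and `10`,
so that the middle coefficient satisfies `-307 ≡ A(0) B(10) = ±1 (mod 121)`, which is false.
Hence `P₃` is irreducible. A root of unity is an algebraic integer, so if it were a root of the
irreducible monic `P₃`, then `P₃` would be its minimal polynomial and would have integer
coefficients.
-/

open Polynomial

/-- The normalized characteristic polynomial of Frobenius for `X_γ`, `γ` a nonzero
square mod 11. -/
noncomputable def P₃ : ℚ[X] :=
  X ^ 20 - 4 * X ^ 18 + 10 * X ^ 16 - 18 * X ^ 14 + 25 * X ^ 12 - C (307 / 11 : ℚ) * X ^ 10 +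
    25 * X ^ 8 - 18 * X ^ 6 + 10 * X ^ 4 - 4 * X ^ 2 + 1

theorem isUnit_of_mul_eq_of_dvd {M : Type*} [CommMonoid M] {p a b : M} (hp : Irreducible p)
    (hab : a * b = p) (hb : p ∣ b) : IsUnit a :=
  (hp.isUnit_or_isUnit hab.symm).resolve_right fun hu => hp.not_isUnit (isUnit_of_dvd_unit hb hu)

theorem Polynomial.eq_C_mul_X_pow_of_mul_eq_X_pow {K : Type*} [Field K] {f g : K[X]} {n : ℕ}
    (h : f * g = X ^ n) : ∃ c ≠ 0, ∃ i, f = C c * X ^ i := by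
  obtain ⟨i, -, hi⟩ := (dvd_prime_pow prime_X n).mp ⟨g, h.symm⟩
  obtain ⟨u, hu⟩ := hi.symm
  obtain ⟨c, hc, hcu⟩ := Polynomial.isUnit_iff.mp u.isUnit
  exact ⟨c, hc.ne_zero, i, by rw [← hu, ← hcu, mul_comm]⟩

theorem Polynomial.natCast_dvd_coeff_of_map_eq_C_mul_X_pow {p : ℕ} {A : ℤ[X]} {c : ZMod p}
    {i k : ℕ} (hA : A.map (Int.castRingHom (ZMod p)) = C c * X ^ i) (hk : k ≠ i) :
    (p : ℤ) ∣ A.coeff k := by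
  rw [← ZMod.intCast_zmod_eq_zero_iff_dvd, ← eq_intCast (Int.castRingHom (ZMod p)), ← coeff_map,
    hA, coeff_C_mul_X_pow, if_neg hk]

open Finset in
theorem Polynomial.sq_dvd_coeff_mul_sub {R : Type*} [CommRing R] {p : R} {A B : R[X]} {m : ℕ}
    (hA : ∀ k ≠ 0, p ∣ A.coeff k) (hB : ∀ k ≠ m, p ∣ B.coeff k) :
    p ^ 2 ∣ (A * B).coeff m - A.coeff 0 * B.coeff m := by
  have hmem : (0, m) ∈ antidiagonal m := by simp
  rw [coeff_mul, ← add_sum_erase _ _ hmem, add_sub_cancel_left, sq]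
  refine dvd_sum fun x hx => ?_
  obtain ⟨hx0, hxm⟩ := mem_erase.mp hx
  rw [HasAntidiagonal.mem_antidiagonal] at hxm
  have h1 : x.1 ≠ 0 := fun h => hx0 (Prod.ext h (by omega))
  exact mul_dvd_mul (hA _ h1) (hB _ (by omega))

theorem Polynomial.IsPrimitive.natDegree_pos_of_dvd {R : Type*} [CommSemiring R] {f g : R[X]}
    (hf : f.IsPrimitive) (hg : g ∣ f) (hu : ¬IsUnit g) : 0 < g.natDegree := by
  refine Nat.pos_of_ne_zero fun h0 => hu ?_
  obtain ⟨c, rfl⟩ := natDegree_eq_zero.mp h0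
  exact isUnit_C.mpr (hf c hg)

theorem Polynomial.aeval_ne_zero_of_coeff_notMem_range_intCast {L : Type*} [Field L] [CharZero L]
    {f : ℚ[X]} (hirr : Irreducible f) (hmonic : f.Monic) {k : ℕ}
    (hk : f.coeff k ∉ Set.range ((↑) : ℤ → ℚ)) {x : L} (hx : IsIntegral ℤ x) :
    aeval x f ≠ 0 := by
  intro hfx
  have hf : f = (minpoly ℤ x).map (algebraMap ℤ ℚ) := by
    rw [← minpoly.isIntegrallyClosed_eq_field_fractions' ℚ hx,
      minpoly.eq_of_irreducible_of_monic hirr hfx hmonic]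
  exact hk ⟨(minpoly ℤ x).coeff k, by rw [hf, coeff_map, eq_intCast]⟩

noncomputable def Q₃ : ℤ[X] :=
  11 * X ^ 20 - 44 * X ^ 18 + 110 * X ^ 16 - 198 * X ^ 14 + 275 * X ^ 12 - 307 * X ^ 10 +
    275 * X ^ 8 - 198 * X ^ 6 + 110 * X ^ 4 - 44 * X ^ 2 + 11

theorem natDegree_Q₃ : Q₃.natDegree = 20 := by unfold Q₃; compute_degree!

theorem coeff_Q₃_zero : Q₃.coeff 0 = 11 := by simp [Q₃, coeff_X_pow]

theorem coeff_Q₃_ten : Q₃.coeff 10 = -307 := by simp [Q₃, coeff_X_pow]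

theorem leadingCoeff_Q₃ : Q₃.leadingCoeff = 11 := by
  rw [leadingCoeff, natDegree_Q₃]; simp [Q₃, coeff_X_pow]

theorem map_Q₃_zmod : Q₃.map (Int.castRingHom (ZMod 11)) = X ^ 10 := by
  have h : Q₃ = X ^ 10 + 11 * (X ^ 20 - 4 * X ^ 18 + 10 * X ^ 16 - 18 * X ^ 14 + 25 * X ^ 12
      - 28 * X ^ 10 + 25 * X ^ 8 - 18 * X ^ 6 + 10 * X ^ 4 - 4 * X ^ 2 + 1) := by
    rw [Q₃]; ring
  have h11 : (11 : (ZMod 11)[X]) = 0 := by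
    rw [← map_ofNat C, show (11 : ZMod 11) = 0 from rfl, C_0]
  simp [h, h11]

theorem map_Q₃_rat : Q₃.map (Int.castRingHom ℚ) = 11 * P₃ := by
  have h : (11 * C (307 / 11) : ℚ[X]) = 307 := by
    rw [← map_ofNat C 11, ← map_ofNat C 307, ← C_mul]; norm_num
  simp only [Q₃, P₃, Polynomial.map_add, Polynomial.map_sub, Polynomial.map_mul,
    Polynomial.map_pow, Polynomial.map_X, Polynomial.map_ofNat]
  linear_combination (X : ℚ[X]) ^ 10 * h

theorem isPrimitive_Q₃ : Q₃.IsPrimitive := by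
  refine isPrimitive_iff_isUnit_of_C_dvd.mpr fun r hr => ?_
  have h0 : r ∣ 11 := coeff_Q₃_zero ▸ (C_dvd_iff_dvd_coeff r Q₃).mp hr 0
  have h10 : r ∣ -307 := coeff_Q₃_ten ▸ (C_dvd_iff_dvd_coeff r Q₃).mp hr 10
  exact isUnit_of_dvd_one (by simpa using dvd_add (h0.mul_left 28) h10)

theorem irreducible_eleven : Irreducible (11 : ℤ) :=
  (Int.prime_iff_natAbs_prime.mpr (by norm_num)).irreducible

theorem mul_ne_Q₃_of_dvd_coeff {A B : ℤ[X]} (hA : 0 < A.natDegree)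
    (hAdvd : ∀ k ≠ 0, 11 ∣ A.coeff k) (hBdvd : ∀ k ≠ 10, 11 ∣ B.coeff k) : A * B ≠ Q₃ := by
  intro hAB
  have hlcA : 11 ∣ A.leadingCoeff := hAdvd _ hA.ne'
  have hlcB : IsUnit B.leadingCoeff :=
    isUnit_of_mul_eq_of_dvd irreducible_eleven
      (by rw [← leadingCoeff_mul, mul_comm, hAB, leadingCoeff_Q₃]) hlcA
  have hdegB : B.natDegree = 10 := by
    by_contra h
    exact irreducible_eleven.not_isUnit (isUnit_of_dvd_unit (hBdvd _ h) hlcB)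
  have hB10 : IsUnit (B.coeff 10) := hdegB ▸ hlcB
  have hA0 : IsUnit (A.coeff 0) :=
    isUnit_of_mul_eq_of_dvd irreducible_eleven (by rw [← mul_coeff_zero, hAB, coeff_Q₃_zero])
      (hBdvd 0 (by norm_num))
  have hmid := sq_dvd_coeff_mul_sub hAdvd hBdvd
  rw [hAB, coeff_Q₃_ten] at hmid
  rcases Int.isUnit_iff.mp (hA0.mul hB10) with h | h <;> rw [h] at hmid <;> norm_num at hmid

theorem mul_ne_Q₃ {A B : ℤ[X]} (hA : 0 < A.natDegree) (hB : 0 < B.natDegree) : A * B ≠ Q₃ := by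
  intro hAB
  have : Fact (Nat.Prime 11) := ⟨by norm_num⟩
  set φ := Int.castRingHom (ZMod 11)
  have hmod : A.map φ * B.map φ = X ^ 10 := by rw [← Polynomial.map_mul, hAB, map_Q₃_zmod]
  obtain ⟨s, hs, i, hAi⟩ := eq_C_mul_X_pow_of_mul_eq_X_pow hmod
  obtain ⟨t, ht, j, hBj⟩ := eq_C_mul_X_pow_of_mul_eq_X_pow ((mul_comm _ _).trans hmod)
  have hij : i + j = 10 := by
    have := congrArg natDegree hmod
    rwa [hAi, hBj, natDegree_mul (by simpa using hs) (by simpa using ht),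
      natDegree_C_mul_X_pow _ _ hs, natDegree_C_mul_X_pow _ _ ht, natDegree_X_pow] at this
  have hA' : ∀ k ≠ i, (11 : ℤ) ∣ A.coeff k := fun _ => natCast_dvd_coeff_of_map_eq_C_mul_X_pow hAi
  have hB' : ∀ k ≠ j, (11 : ℤ) ∣ B.coeff k := fun _ => natCast_dvd_coeff_of_map_eq_C_mul_X_pow hBj
  rcases Nat.eq_zero_or_pos i with rfl | hi
  · obtain rfl : j = 10 := by omega
    exact mul_ne_Q₃_of_dvd_coeff hA hA' hB' hAB
  rcases Nat.eq_zero_or_pos j with rfl | hj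
  · obtain rfl : i = 10 := by omega
    exact mul_ne_Q₃_of_dvd_coeff hB hB' hA' ((mul_comm B A).trans hAB)
  have hA0 : IsUnit (A.coeff 0) :=
    isUnit_of_mul_eq_of_dvd irreducible_eleven (by rw [← mul_coeff_zero, hAB, coeff_Q₃_zero])
      (hB' 0 hj.ne)
  exact irreducible_eleven.not_isUnit (isUnit_of_dvd_unit (hA' 0 hi.ne) hA0)

theorem irreducible_Q₃ : Irreducible Q₃ := by
  refine ⟨fun h => by simpa [natDegree_Q₃] using natDegree_eq_zero_of_isUnit h, fun A B hAB => ?_⟩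
  by_contra! ⟨hA, hB⟩
  exact mul_ne_Q₃ (isPrimitive_Q₃.natDegree_pos_of_dvd ⟨B, hAB⟩ hA)
    (isPrimitive_Q₃.natDegree_pos_of_dvd ⟨A, hAB.trans (mul_comm A B)⟩ hB) hAB.symm

theorem irreducible_P₃ : Irreducible P₃ := by
  have h := (IsPrimitive.Int.irreducible_iff_irreducible_map_cast isPrimitive_Q₃).mp irreducible_Q₃
  have h11 : IsUnit (11 : ℚ[X]) := by rw [← map_ofNat C]; exact isUnit_C.mpr (by norm_num)
  rwa [map_Q₃_rat, irreducible_isUnit_mul h11] at h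

theorem monic_P₃ : P₃.Monic := by unfold P₃; monicity!

theorem coeff_P₃_ten_notMem_range_intCast : P₃.coeff 10 ∉ Set.range ((↑) : ℤ → ℚ) := by
  rintro ⟨m, hm⟩
  have hcoeff : P₃.coeff 10 = -(307 / 11) := by simp [P₃, coeff_X_pow, coeff_one]
  have h : (11 * m : ℚ) = -307 := by rw [hm, hcoeff]; norm_num
  have h' : 11 * m = -307 := by exact_mod_cast h
  omega

/-- `P₃` is irreducible over `ℚ`, and no complex root of unity is a root of `P₃`. -/
theorem stmt16 :
    Irreducible P₃ ∧ ∀ z : ℂ, (∃ n : ℕ, 1 ≤ n ∧ z ^ n = 1) → aeval z P₃ ≠ 0 := by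
  refine ⟨irreducible_P₃, fun z ⟨n, hn, hz⟩ => ?_⟩
  have hint : IsIntegral ℤ z := IsIntegral.of_pow hn (hz ▸ isIntegral_one)
  exact aeval_ne_zero_of_coeff_notMem_range_intCast irreducible_P₃ monic_P₃
    coeff_P₃_ten_notMem_range_intCast hint
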